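/- Let φ_n(t) = exp((n-2)√t/(n+√t)) for integers n ≥ 2 and φ_0(t) = φ_1(t) = 1. For every integer n ≥ 1 and every t ≥ 0, Σ_{k=1}^n C(n,k)^{-1} φ_{n-k}(t) φ_k(t)/φ_n(t) ≤ 5/3, where C(n,k) is the binomial coefficient. -/

import Mathlib

/-!
Write `φ_j(t) = exp(f(j))` with `f(j) = (j - 2)₊ √t / (j + √t)`. Since `f` is monotone in `j`
and `f(j) ≤ (j - 2)₊`, the exponent `f(n - k) + f(k) - f(n)` is at most `(min(k, n - k) - 2)₊`,
so each ratio is at most `3 ^ (min(k, n - k) - 2)₊` and the claim reduces to the combinatorial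
bound `∑ₖ 3 ^ (min(k, n - k) - 2)₊ / C(n, k) ≤ 5/3`. This bound is tight at `n = 3, 4`; it is
checked directly for `n < 20`. For `n ≥ 20`, `C(n, k)` is at least `C(max(2j, 20), j)` with
`j = min(k, n - k)`, and the resulting majorant decays geometrically (ratio `4/5`) from `j = 10`.
-/

noncomputable def phi (n : ℕ) (t : ℝ) : ℝ :=
  if n ≤ 1 then 1 else Real.exp (((n : ℝ) - 2) * Real.sqrt t / ((n : ℝ) + Real.sqrt t))

open Finset Real
open scoped Nat

noncomputable def phiExponent (s : ℝ) (j : ℕ) : ℝ := ((j - 2 : ℕ) : ℝ) * s / (j + s)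

lemma phi_eq_exp_phiExponent (n : ℕ) (t : ℝ) : phi n t = exp (phiExponent (√t) n) := by
  unfold phi phiExponent
  split_ifs with hn
  · simp [Nat.sub_eq_zero_of_le (hn.trans one_le_two)]
  · rw [Nat.cast_sub (by omega), Nat.cast_ofNat]

lemma phiExponent_mono {s : ℝ} (hs : 0 ≤ s) : Monotone (phiExponent s) := by
  intro a b hab
  have hab' : (a : ℝ) ≤ b := by exact_mod_cast hab
  unfold phiExponent
  rcases le_or_gt a 1 with ha | ha
  · rw [Nat.sub_eq_zero_of_le (ha.trans one_le_two)]
    simp only [Nat.cast_zero, zero_mul, zero_div]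
    positivity
  · have h2 : (2 : ℝ) ≤ a := by exact_mod_cast ha
    rw [Nat.cast_sub (by omega), Nat.cast_sub (by omega), Nat.cast_ofNat,
      div_le_div_iff₀ (by linarith) (by linarith)]
    nlinarith [mul_nonneg (sub_nonneg.2 hab') hs]

lemma phiExponent_le_natSub {s : ℝ} (hs : 0 ≤ s) (j : ℕ) : phiExponent s j ≤ (j - 2 : ℕ) := by
  rw [phiExponent, mul_div_assoc]
  exact mul_le_of_le_one_right (Nat.cast_nonneg _)
    (div_le_one_of_le₀ (by linarith [(Nat.cast_nonneg j : (0 : ℝ) ≤ j)]) (by positivity))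

lemma exp_natCast_le_three_pow (m : ℕ) : exp m ≤ 3 ^ m := by
  rw [← exp_one_pow]
  exact pow_le_pow_left₀ (exp_pos 1).le exp_one_lt_three.le m

lemma phi_mul_phi_div_phi_le {n k : ℕ} (hk : k ≤ n) (t : ℝ) :
    phi (n - k) t * phi k t / phi n t ≤ 3 ^ (min k (n - k) - 2) := by
  rw [phi_eq_exp_phiExponent, phi_eq_exp_phiExponent, phi_eq_exp_phiExponent, ← exp_add,
    ← exp_sub]
  have hs := sqrt_nonneg t
  have hexp : phiExponent √t (n - k) + phiExponent √t k - phiExponent √t n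
      ≤ (min k (n - k) - 2 : ℕ) := by
    rw [show min k (n - k) - 2 = min (k - 2) (n - k - 2) by omega, Nat.cast_min, le_min_iff]
    have := phiExponent_mono hs (Nat.sub_le n k)
    have := phiExponent_mono hs hk
    have := phiExponent_le_natSub hs k
    have := phiExponent_le_natSub hs (n - k)
    constructor <;> linarith
  exact (exp_le_exp.2 hexp).trans (exp_natCast_le_three_pow _)

noncomputable def binomWeight (n k : ℕ) : ℝ := (n.choose k : ℝ)⁻¹ * 3 ^ (min k (n - k) - 2)

lemma inv_choose_eq_factorial_mul_factorial_div {n k : ℕ} (hk : k ≤ n) :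
    ((n.choose k : ℝ))⁻¹ = (k ! * (n - k)! : ℕ) / n ! := by
  rw [Nat.cast_choose ℝ hk, inv_div, Nat.cast_mul]

lemma sum_binomWeight_le_of_lt_twenty {n : ℕ} (hn : n < 20) :
    ∑ k ∈ Icc 1 n, binomWeight n k ≤ 5 / 3 := by
  have hcheck : ∀ n < 20,
      3 * ∑ k ∈ Icc 1 n, 3 ^ (min k (n - k) - 2) * (k ! * (n - k)!) ≤ 5 * n ! := by
    decide
  have hsum : ∑ k ∈ Icc 1 n, binomWeight n k
      = (∑ k ∈ Icc 1 n, 3 ^ (min k (n - k) - 2) * (k ! * (n - k)!) : ℕ) / n ! := by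
    rw [Nat.cast_sum, sum_div]
    refine sum_congr rfl fun k hk => ?_
    rw [binomWeight, inv_choose_eq_factorial_mul_factorial_div (mem_Icc.1 hk).2]
    push_cast
    ring
  rw [hsum, div_le_div_iff₀ (by positivity) (by norm_num), mul_comm]
  exact_mod_cast hcheck n hn

lemma sum_Ico_le_div_one_sub_of_ratio_le {f : ℕ → ℝ} {r : ℝ} {a b : ℕ} (hr : r < 1)
    (hab : a ≤ b) (hf : ∀ j ≥ a, f (j + 1) ≤ r * f j) (hf0 : ∀ j, 0 ≤ f j) :
    ∑ j ∈ Ico a b, f j ≤ f a / (1 - r) := by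
  have telescope : (1 - r) * ∑ j ∈ Ico a b, f j ≤ f a - f b := by
    induction b, hab using Nat.le_induction with
    | base => simp
    | succ b hab ih =>
      rw [sum_Ico_succ_top hab]
      linarith [hf b hab]
  rw [le_div_iff₀ (by linarith), mul_comm]
  linarith [hf0 b]

noncomputable def binomWeightMajorant (N j : ℕ) : ℝ := 3 ^ (j - 2) / (max (2 * j) N).choose j

lemma binomWeightMajorant_nonneg (N j : ℕ) : 0 ≤ binomWeightMajorant N j := by
  unfold binomWeightMajorant
  positivity

lemma binomWeight_le_majorant {N n k : ℕ} (hN : N ≤ n) (hk : k ≤ n) :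
    binomWeight n k ≤ binomWeightMajorant N k + binomWeightMajorant N (n - k) := by
  set j := min k (n - k) with hj
  have hchoose : n.choose k = n.choose j := by
    rcases le_total k (n - k) with h | h
    · rw [hj, min_eq_left h]
    · rw [hj, min_eq_right h, Nat.choose_symm hk]
  have hweight : binomWeight n k ≤ binomWeightMajorant N j := by
    rw [binomWeight, hchoose, inv_mul_eq_div, binomWeightMajorant]
    refine div_le_div_of_nonneg_left (by positivity) ?_ ?_
    · exact_mod_cast Nat.choose_pos ((le_max_left _ _).trans' (by omega))
    · exact_mod_cast Nat.choose_le_choose j (max_le (by omega) hN)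
  rcases le_total k (n - k) with h | h
  · rw [hj, min_eq_left h] at hweight
    linarith [binomWeightMajorant_nonneg N (n - k)]
  · rw [hj, min_eq_right h] at hweight
    linarith [binomWeightMajorant_nonneg N k]

lemma fifteen_mul_centralBinom_le {j : ℕ} (hj : 7 ≤ j) :
    15 * j.centralBinom ≤ 4 * (j + 1).centralBinom := by
  refine Nat.le_of_mul_le_mul_left ?_ j.succ_pos
  have := Nat.succ_mul_centralBinom_succ j
  nlinarith [Nat.zero_le j.centralBinom]

lemma binomWeightMajorant_succ_le {N j : ℕ} (hN : N ≤ 2 * j) (hj : 7 ≤ j) :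
    binomWeightMajorant N (j + 1) ≤ 4 / 5 * binomWeightMajorant N j := by
  have hcb : (15 * j.centralBinom : ℝ) ≤ 4 * (j + 1).centralBinom := by
    exact_mod_cast fifteen_mul_centralBinom_le hj
  have hpos : (0 : ℝ) < j.centralBinom := by exact_mod_cast j.centralBinom_pos
  have hpos' : (0 : ℝ) < (j + 1).centralBinom := by exact_mod_cast (j + 1).centralBinom_pos
  unfold binomWeightMajorant
  rw [max_eq_left hN, max_eq_left (by omega), ← Nat.centralBinom_eq_two_mul_choose,
    ← Nat.centralBinom_eq_two_mul_choose, show j + 1 - 2 = j - 2 + 1 by omega, pow_succ,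
    div_le_iff₀ hpos', mul_div_assoc', div_mul_eq_mul_div, le_div_iff₀ hpos]
  nlinarith [pow_pos (three_pos : (0 : ℝ) < 3) (j - 2)]

lemma sum_range_binomWeight_le_two_mul {N n : ℕ} (hN : N ≤ n) :
    ∑ k ∈ range (n + 1), binomWeight n k
      ≤ 2 * ∑ k ∈ range (n + 1), binomWeightMajorant N k := by
  have hreflect : ∑ k ∈ range (n + 1), binomWeightMajorant N (n - k)
      = ∑ k ∈ range (n + 1), binomWeightMajorant N k := by
    simpa using sum_range_reflect (binomWeightMajorant N) (n + 1)
  calc ∑ k ∈ range (n + 1), binomWeight n k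
      ≤ ∑ k ∈ range (n + 1), (binomWeightMajorant N k + binomWeightMajorant N (n - k)) :=
        sum_le_sum fun k hk => binomWeight_le_majorant hN (Nat.lt_succ_iff.1 (mem_range.1 hk))
    _ = 2 * ∑ k ∈ range (n + 1), binomWeightMajorant N k := by
        rw [sum_add_distrib, hreflect, two_mul]

lemma sum_range_binomWeightMajorant_twenty_le {m : ℕ} (hm : 10 ≤ m) :
    ∑ j ∈ range m, binomWeightMajorant 20 j ≤ 4 / 3 := by
  have htail : ∑ j ∈ Ico 10 m, binomWeightMajorant 20 j
      ≤ binomWeightMajorant 20 10 / (1 - 4 / 5) :=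
    sum_Ico_le_div_one_sub_of_ratio_le (by norm_num) hm
      (fun j hj => binomWeightMajorant_succ_le (by omega) (by omega))
      (binomWeightMajorant_nonneg 20)
  have hhead : ∑ j ∈ range 10, binomWeightMajorant 20 j + 5 * binomWeightMajorant 20 10
      ≤ 4 / 3 := by
    simp only [binomWeightMajorant, sum_range_succ, sum_range_zero]
    norm_num [Nat.choose_eq_factorial_div_factorial, Nat.factorial]
  rw [← sum_range_add_sum_Ico _ hm]
  norm_num at htail
  linarith

lemma sum_binomWeight_le_of_twenty_le {n : ℕ} (hn : 20 ≤ n) :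
    ∑ k ∈ Icc 1 n, binomWeight n k ≤ 5 / 3 := by
  have hzero : ∑ k ∈ range (n + 1), binomWeight n k = 1 + ∑ k ∈ Icc 1 n, binomWeight n k := by
    rw [range_eq_Ico, sum_eq_sum_Ico_succ_bot (by omega : 0 < n + 1), zero_add,
      Ico_add_one_right_eq_Icc]
    simp [binomWeight]
  have := sum_range_binomWeight_le_two_mul hn
  have := sum_range_binomWeightMajorant_twenty_le (by omega : 10 ≤ n + 1)
  linarith

lemma sum_binomWeight_le (n : ℕ) : ∑ k ∈ Icc 1 n, binomWeight n k ≤ 5 / 3 := by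
  rcases lt_or_ge n 20 with hn | hn
  · exact sum_binomWeight_le_of_lt_twenty hn
  · exact sum_binomWeight_le_of_twenty_le hn

theorem phi_convolution_sum_le_general (n : ℕ) (t : ℝ) :
    ∑ k ∈ Finset.Icc 1 n,
      ((n.choose k : ℝ))⁻¹ * (phi (n - k) t * phi k t / phi n t) ≤ 5 / 3 :=
  (sum_le_sum fun k hk => mul_le_mul_of_nonneg_left
    (phi_mul_phi_div_phi_le (mem_Icc.1 hk).2 t) (by positivity)).trans (sum_binomWeight_le n)

theorem phi_convolution_sum_le (n : ℕ) (hn : 1 ≤ n) (t : ℝ) (ht : 0 ≤ t) :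
    ∑ k ∈ Finset.Icc 1 n,
      ((n.choose k : ℝ))⁻¹ * (phi (n - k) t * phi k t / phi n t) ≤ 5 / 3 :=
  phi_convolution_sum_le_general n t
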